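/- Let n ≥ 1 be an integer, σ ∈ S_n a permutation, and γ a real number. (i) If 0 < γ < 1, then for every g ∈ S_n one has γ·l(g) + l(σ⁻¹g) ≤ n + γ·l(σ), with equality if and only if g = σ. (ii) If γ > 1, then for every g ∈ S_n one has γ·l(g) + l(σ⁻¹g) ≤ γ·n + l(σ), with equality if and only if g is the identity permutation. -/

import Mathlib

/-!
Let `l(g)` be the number of cycles of `g`. It is the dimension of the space of functions
`Fin n → ℚ` invariant under `g`, i.e. constant on the cycles of `g`. Functions invariant under
both `a` and `b` are invariant under `a * b`, so the dimension formula for `U ⊔ W` and `U ⊓ W`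
gives `l(a) + l(b) ≤ n + l(a * b)`; applied to `g` and `g⁻¹ * σ` this is
`l(g) + l(σ⁻¹ * g) ≤ n + l(σ)`. Writing the weighted sum as a convex combination of this
inequality and of `l ≤ n` (which is an equality only at the identity) gives both bounds and their
equality cases.
-/

/-- Number of cycles of a permutation, counting fixed points as cycles of length 1. -/
def cycleCount {n : ℕ} (g : Equiv.Perm (Fin n)) : ℕ :=
  g.cycleType.card + (n - g.support.card)

open Module Finset

namespace Equiv.Perm

variable {α : Type*}

section CycleDecomposition

variable [Fintype α] [DecidableEq α]

lemma two_mul_card_cycleType_le (g : Perm α) : 2 * Multiset.card g.cycleType ≤ #g.support := by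
  rw [← sum_cycleType, mul_comm, ← smul_eq_mul]
  exact Multiset.card_nsmul_le_sum fun _ => two_le_of_mem_cycleType

lemma apply_ne_of_mem_cycleFactorsFinset {g c : Perm α} {a : α}
    (hc : c ∈ g.cycleFactorsFinset) (ha : a ∈ c.support) : g a ≠ a :=
  mem_support.1 (mem_cycleFactorsFinset_support_le hc ha)

noncomputable def toQuotientSameCycle (g : Perm α) :
    Function.fixedPoints g ⊕ g.cycleFactorsFinset → Quotient (SameCycle.setoid g)
  | .inl x => ⟦x⟧
  | .inr c => ⟦(mem_cycleFactorsFinset_iff.1 c.2).1.nonempty_support.choose⟧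

lemma toQuotientSameCycle_bijective (g : Perm α) :
    Function.Bijective (toQuotientSameCycle g) := by
  have rep_mem (c : g.cycleFactorsFinset) :=
    (mem_cycleFactorsFinset_iff.1 c.2).1.nonempty_support.choose_spec
  have rep_moved (c : g.cycleFactorsFinset) := apply_ne_of_mem_cycleFactorsFinset c.2 (rep_mem c)
  constructor
  · rintro (⟨x, hx⟩ | c) (⟨y, hy⟩ | d) h <;> have h : SameCycle g _ _ := Quotient.exact h
    · exact congrArg _ (Subtype.ext (h.eq_of_left hx))
    · exact absurd (h.eq_of_left hx ▸ hx) (rep_moved d)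
    · exact absurd (h.eq_of_right hy ▸ hy) (rep_moved c)
    · refine congrArg _ (Subtype.ext ?_)
      rw [cycle_is_cycleOf (rep_mem c) c.2, cycle_is_cycleOf (rep_mem d) d.2, h.cycleOf_eq]
  · rintro ⟨x⟩
    by_cases hx : g x = x
    · exact ⟨.inl ⟨x, hx⟩, rfl⟩
    · have hc : g.cycleOf x ∈ g.cycleFactorsFinset :=
        cycleOf_mem_cycleFactorsFinset_iff.2 (mem_support.2 hx)
      exact ⟨.inr ⟨_, hc⟩, Quotient.sound (mem_support_cycleOf_iff.1 (rep_mem ⟨_, hc⟩)).1.symm⟩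

theorem card_quotient_sameCycle (g : Perm α) :
    Nat.card (Quotient (SameCycle.setoid g)) =
      Multiset.card g.cycleType + (Fintype.card α - #g.support) := by
  rw [← Nat.card_congr (Equiv.ofBijective _ (toQuotientSameCycle_bijective g)), Nat.card_sum,
    Nat.card_eq_fintype_card, card_fixedPoints, sum_cycleType, cycleType_def, Multiset.card_map,
    add_comm]
  simp only [Nat.card_eq_fintype_card, Fintype.card_coe, card_val]

end CycleDecomposition

section Invariants

def invariants (K : Type*) [Field K] (g : Perm α) : Submodule K (α → K) :=
  LinearMap.eqLocus (LinearMap.funLeft K K g) LinearMap.id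

variable {K : Type*} [Field K]

lemma mem_invariants {g : Perm α} {v : α → K} : v ∈ invariants K g ↔ v ∘ g = v := Iff.rfl

lemma invariants_inf_le_invariants_mul (a b : Perm α) :
    invariants K a ⊓ invariants K b ≤ invariants K (a * b) := by
  intro v hv
  obtain ⟨ha, hb⟩ := Submodule.mem_inf.1 hv
  rw [mem_invariants, coe_mul, ← Function.comp_assoc, mem_invariants.1 ha, mem_invariants.1 hb]

variable [Finite α]

noncomputable def invariantsEquiv (g : Perm α) :
    (Quotient (SameCycle.setoid g) → K) ≃ₗ[K] invariants K g where
  toFun w := ⟨w ∘ Quotient.mk _, funext fun x =>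
    congrArg w (Quotient.sound (sameCycle_apply_left.2 SameCycle.rfl))⟩
  map_add' _ _ := rfl
  map_smul' _ _ := rfl
  invFun v := Quotient.lift v fun x y h => by
    obtain ⟨m, rfl⟩ := h.exists_nat_pow_eq
    rw [coe_pow, ← Function.comp_apply (f := v.1),
      Function.iterate_invariant (mem_invariants.1 v.2)]
  left_inv w := funext fun q => Quotient.inductionOn q fun _ => rfl
  right_inv _ := rfl

lemma finrank_invariants (g : Perm α) :
    finrank K (invariants K g) = Nat.card (Quotient (SameCycle.setoid g)) := by
  have := Fintype.ofFinite (Quotient (SameCycle.setoid g))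
  rw [← (invariantsEquiv g).finrank_eq, finrank_fintype_fun_eq_card, Nat.card_eq_fintype_card]

theorem card_quotient_sameCycle_add_le (a b : Perm α) :
    Nat.card (Quotient (SameCycle.setoid a)) + Nat.card (Quotient (SameCycle.setoid b)) ≤
      Nat.card α + Nat.card (Quotient (SameCycle.setoid (a * b))) := by
  have := Fintype.ofFinite α
  simp only [← finrank_invariants (K := ℚ)]
  rw [← Submodule.finrank_sup_add_finrank_inf_eq]
  gcongr
  · rw [Nat.card_eq_fintype_card, ← finrank_fintype_fun_eq_card ℚ]
    exact Submodule.finrank_le _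
  · exact Submodule.finrank_mono (invariants_inf_le_invariants_mul a b)

end Invariants

end Equiv.Perm

open Equiv Equiv.Perm

section CycleCount

variable {n : ℕ}

lemma cycleCount_eq_card_quotient_sameCycle (g : Perm (Fin n)) :
    cycleCount g = Nat.card (Quotient (SameCycle.setoid g)) := by
  rw [card_quotient_sameCycle, Fintype.card_fin, cycleCount]

lemma cycleCount_add_cycleCount_le (a b : Perm (Fin n)) :
    cycleCount a + cycleCount b ≤ n + cycleCount (a * b) := by
  simpa only [cycleCount_eq_card_quotient_sameCycle, Nat.card_eq_fintype_card, Fintype.card_fin]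
    using card_quotient_sameCycle_add_le a b

lemma cycleCount_inv (g : Perm (Fin n)) : cycleCount g⁻¹ = cycleCount g := by
  rw [cycleCount, cycleType_inv, support_inv, cycleCount]

lemma cycleCount_le (g : Perm (Fin n)) : cycleCount g ≤ n := by
  have := two_mul_card_cycleType_le g
  have := (card_le_univ g.support).trans_eq (Fintype.card_fin n)
  rw [cycleCount]
  omega

lemma cycleCount_eq_iff_eq_one {g : Perm (Fin n)} : cycleCount g = n ↔ g = 1 := by
  refine ⟨fun h => card_cycleType_eq_zero.1 ?_, fun h => by simp [h, cycleCount]⟩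
  have := two_mul_card_cycleType_le g
  have := (card_le_univ g.support).trans_eq (Fintype.card_fin n)
  rw [cycleCount] at h
  omega

lemma cycleCount_add_cycleCount_inv_mul_le (σ g : Perm (Fin n)) :
    cycleCount g + cycleCount (σ⁻¹ * g) ≤ n + cycleCount σ := by
  simpa [← cycleCount_inv (σ⁻¹ * g)] using cycleCount_add_cycleCount_le g (σ⁻¹ * g)⁻¹

lemma cycleCount_one : cycleCount (1 : Perm (Fin n)) = n :=
  cycleCount_eq_iff_eq_one.2 rfl

section WeightedBound

variable (σ g : Perm (Fin n)) {γ : ℝ}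

lemma weighted_cycleCount_le_of_lt_one (hγ₀ : 0 < γ) (hγ₁ : γ < 1) :
    γ * cycleCount g + cycleCount (σ⁻¹ * g) ≤ n + γ * cycleCount σ ∧
      (γ * cycleCount g + cycleCount (σ⁻¹ * g) = n + γ * cycleCount σ ↔ g = σ) := by
  have key : (cycleCount g : ℝ) + cycleCount (σ⁻¹ * g) ≤ n + cycleCount σ := by
    exact_mod_cast cycleCount_add_cycleCount_inv_mul_le σ g
  have hle : (cycleCount (σ⁻¹ * g) : ℝ) ≤ n := by exact_mod_cast cycleCount_le _
  refine ⟨by nlinarith, fun h => ?_, ?_⟩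
  · have : (cycleCount (σ⁻¹ * g) : ℝ) = n := by nlinarith
    exact (inv_mul_eq_one.1 (cycleCount_eq_iff_eq_one.1 (by exact_mod_cast this))).symm
  · rintro rfl
    rw [inv_mul_cancel, cycleCount_one]
    ring

lemma weighted_cycleCount_le_of_one_lt (hγ : 1 < γ) :
    γ * cycleCount g + cycleCount (σ⁻¹ * g) ≤ γ * n + cycleCount σ ∧
      (γ * cycleCount g + cycleCount (σ⁻¹ * g) = γ * n + cycleCount σ ↔ g = 1) := by
  have key : (cycleCount g : ℝ) + cycleCount (σ⁻¹ * g) ≤ n + cycleCount σ := by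
    exact_mod_cast cycleCount_add_cycleCount_inv_mul_le σ g
  have hle : (cycleCount g : ℝ) ≤ n := by exact_mod_cast cycleCount_le _
  refine ⟨by nlinarith, fun h => ?_, ?_⟩
  · have : (cycleCount g : ℝ) = n := by nlinarith
    exact cycleCount_eq_iff_eq_one.1 (by exact_mod_cast this)
  · rintro rfl
    rw [mul_one, cycleCount_one, cycleCount_inv]

end WeightedBound

end CycleCount

theorem cycleCount_weighted_max_general (n : ℕ) (σ : Equiv.Perm (Fin n)) (γ : ℝ) :
    (0 < γ → γ < 1 → ∀ g : Equiv.Perm (Fin n),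
      γ * cycleCount g + cycleCount (σ⁻¹ * g) ≤ n + γ * cycleCount σ ∧
      (γ * cycleCount g + cycleCount (σ⁻¹ * g) = n + γ * cycleCount σ ↔ g = σ)) ∧
    (1 < γ → ∀ g : Equiv.Perm (Fin n),
      γ * cycleCount g + cycleCount (σ⁻¹ * g) ≤ γ * n + cycleCount σ ∧
      (γ * cycleCount g + cycleCount (σ⁻¹ * g) = γ * n + cycleCount σ ↔ g = 1)) := by
  exact ⟨fun hγ₀ hγ₁ g => weighted_cycleCount_le_of_lt_one σ g hγ₀ hγ₁,
    fun hγ g => weighted_cycleCount_le_of_one_lt σ g hγ⟩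

/-- (i) For `0 < γ < 1`, `γ·l(g) + l(σ⁻¹g) ≤ n + γ·l(σ)` with equality iff `g = σ`.
(ii) For `γ > 1`, `γ·l(g) + l(σ⁻¹g) ≤ γ·n + l(σ)` with equality iff `g = 1`. -/
theorem cycleCount_weighted_max (n : ℕ) (hn : 1 ≤ n) (σ : Equiv.Perm (Fin n)) (γ : ℝ) :
    (0 < γ → γ < 1 → ∀ g : Equiv.Perm (Fin n),
      γ * cycleCount g + cycleCount (σ⁻¹ * g) ≤ n + γ * cycleCount σ ∧
      (γ * cycleCount g + cycleCount (σ⁻¹ * g) = n + γ * cycleCount σ ↔ g = σ)) ∧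
    (1 < γ → ∀ g : Equiv.Perm (Fin n),
      γ * cycleCount g + cycleCount (σ⁻¹ * g) ≤ γ * n + cycleCount σ ∧
      (γ * cycleCount g + cycleCount (σ⁻¹ * g) = γ * n + cycleCount σ ↔ g = 1)) :=
  cycleCount_weighted_max_general n σ γ
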